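/- arXiv:2106.01261 — 2 statements merged into one kernel-verified Lean document; each statement's English description precedes it below -/
import Mathlib

section
/- Let n ≡ 0 (mod 4). Then x^{n/4} − i = ∏_{d ∈ D_n^1} Φ_{n/d}^1(x) · ∏_{d ∈ D_n^3} Φ_{n/d}^3(x), where the products run over odd divisors d of n congruent to 1 and 3 mod 4 respectively. -/
open Finset Polynomial

/-- `G_m^r(1) = {a : 1 ≤ a ≤ m-1, gcd(a,m)=1, a ≡ r (mod 4)}`. -/
def Grone (m r : ℕ) : Finset ℕ :=
  (Finset.range m).filter (fun a => 1 ≤ a ∧ Nat.gcd a m = 1 ∧ a % 4 = r)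

/-- `Φ_m^r(x) = ∏_{a ∈ G_m^r(1)} (x − e^{2πia/m})`. -/
noncomputable def Phir (m r : ℕ) : Polynomial ℂ :=
  ∏ a ∈ Grone m r, (X - C (Complex.exp (2 * Real.pi * Complex.I * a / m)))

/-- `D_n^r` : odd divisors of `n` congruent to `r` mod 4. -/
def Dr (n r : ℕ) : Finset ℕ := n.divisors.filter (fun h => h % 4 = r)

lemma fiber_lemma (n r d : ℕ) (hn : 0 < n) (hr : r = 1 ∨ r = 3) (hd : d ∣ n)
    (hdr : d % 4 = r) :
    Phir (n / d) r = ∏ b ∈ ((Finset.range n).filter (fun b => b % 4 = 1)).filter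
      (fun b => Nat.gcd b n = d),
      (X - C (Complex.exp (2 * Real.pi * Complex.I * b / n))) := by
  have hd0 : d ≠ 0 := by omega
  have hdpos : 0 < d := Nat.pos_of_ne_zero hd0
  have hnd : n / d * d = n := Nat.div_mul_cancel hd
  have hnd0 : 0 < n / d := Nat.div_pos (Nat.le_of_dvd hn hd) hdpos
  unfold Phir Grone
  apply Finset.prod_nbij (fun a => a * d)
  · intro a ha
    simp only [Finset.mem_filter, Finset.mem_range] at ha ⊢
    obtain ⟨halt, ha1, hag, ha4⟩ := ha
    refine ⟨⟨by calc a * d < (n/d) * d := (Nat.mul_lt_mul_right hdpos).mpr halt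
                   _ = n := hnd, ?_⟩, ?_⟩
    · rw [Nat.mul_mod, ha4, hdr]
      rcases hr with h | h <;> subst h <;> norm_num
    · calc Nat.gcd (a * d) n = Nat.gcd (a * d) (n / d * d) := by rw [hnd]
        _ = Nat.gcd a (n / d) * d := Nat.gcd_mul_right a d (n/d)
        _ = d := by rw [hag, one_mul]
  · intro a _ b _ hab
    exact Nat.eq_of_mul_eq_mul_right hdpos hab
  · intro b hb
    simp only [Finset.coe_filter, Finset.mem_range, Set.mem_image, Set.mem_setOf_eq,
      Finset.mem_coe, Finset.mem_filter] at hb ⊢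
    obtain ⟨⟨hblt, hb4⟩, hbg⟩ := hb
    have hdb : d ∣ b := hbg ▸ Nat.gcd_dvd_left b n
    obtain ⟨a, rfl⟩ := hdb
    have hcomm : d * a = a * d := mul_comm d a
    refine ⟨a, ⟨⟨?_, ?_, ?_, ?_⟩, hcomm.symm⟩⟩
    · have : a * d < n / d * d := by rw [hnd, ← hcomm]; exact hblt
      exact Nat.lt_of_mul_lt_mul_right this
    · rcases Nat.eq_zero_or_pos a with h | h
      · subst h; simp at hb4
      · exact h
    · have h1 : Nat.gcd a (n / d) * d = 1 * d := by
        rw [one_mul, ← Nat.gcd_mul_right a d (n/d), hnd, ← hcomm]; exact hbg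
      exact Nat.eq_of_mul_eq_mul_right hdpos h1
    · rw [hcomm, Nat.mul_mod, hdr] at hb4
      rcases hr with h | h <;> subst h <;> omega
  · intro a ha
    simp only [Finset.mem_filter, Finset.mem_range] at ha
    congr 2
    have hdC : (d : ℂ) ≠ 0 := Nat.cast_ne_zero.mpr hd0
    have hndC : ((n / d : ℕ) : ℂ) ≠ 0 := Nat.cast_ne_zero.mpr (by omega)
    have hcast : ((n : ℕ) : ℂ) = ((n / d : ℕ) : ℂ) * (d : ℂ) := by
      exact_mod_cast hnd.symm
    rw [hcast]
    push_cast
    field_simp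

lemma lhs_lemma (n : ℕ) (hn : 0 < n) (h4 : n % 4 = 0) :
    (X : Polynomial ℂ) ^ (n / 4) - C Complex.I =
      ∏ b ∈ (Finset.range n).filter (fun b => b % 4 = 1),
        (X - C (Complex.exp (2 * Real.pi * Complex.I * b / n))) := by
  set m := n / 4 with hm
  have hm0 : 0 < m := Nat.div_pos (by omega) (by norm_num)
  have hnm : n = 4 * m := by omega
  have hζ : IsPrimitiveRoot (Complex.exp (2 * Real.pi * Complex.I / m)) m :=
    Complex.isPrimitiveRoot_exp m hm0.ne'
  have hmC : (m : ℂ) ≠ 0 := Nat.cast_ne_zero.mpr hm0.ne'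
  have hnC : (n : ℂ) = 4 * m := by exact_mod_cast congrArg Nat.cast hnm
  have e : (Complex.exp (2 * Real.pi * Complex.I / n)) ^ m = Complex.I := by
    rw [← Complex.exp_nat_mul, hnC]
    have : (m : ℂ) * (2 * Real.pi * Complex.I / (4 * m)) = (Real.pi / 2 : ℝ) * Complex.I := by
      push_cast
      field_simp
      ring
    rw [this, Complex.exp_mul_I, ← Complex.ofReal_cos, ← Complex.ofReal_sin,
      Real.cos_pi_div_two, Real.sin_pi_div_two]
    simp
  rw [X_pow_sub_C_eq_prod hζ hm0 e]
  apply Finset.prod_nbij (fun k => 4 * k + 1)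
  · intro k hk
    simp only [Finset.mem_range, Finset.mem_filter] at hk ⊢
    omega
  · intro a _ b _ hab
    have : 4 * a + 1 = 4 * b + 1 := hab
    omega
  · intro b hb
    simp only [Finset.coe_filter, Finset.mem_range, Set.mem_image, Set.mem_setOf_eq,
      Finset.mem_coe] at hb ⊢
    obtain ⟨hblt, hb4⟩ := hb
    exact ⟨b / 4, by omega, by omega⟩
  · intro k hk
    simp only [Finset.mem_range] at hk
    congr 2
    rw [← Complex.exp_nat_mul, ← Complex.exp_add]
    congr 1
    rw [hnC]
    push_cast
    field_simp

theorem stmt8 (n : ℕ) (hn : 0 < n) (h4 : n % 4 = 0) :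
    (X : Polynomial ℂ) ^ (n / 4) - C Complex.I =
      (∏ d ∈ Dr n 1, Phir (n / d) 1) * (∏ d ∈ Dr n 3, Phir (n / d) 3) := by
  rw [lhs_lemma n hn h4]
  have h1 : ∀ d ∈ Dr n 1, Phir (n / d) 1 =
      ∏ b ∈ ((Finset.range n).filter (fun b => b % 4 = 1)).filter
        (fun b => Nat.gcd b n = d),
        (X - C (Complex.exp (2 * Real.pi * Complex.I * b / n))) := by
    intro d hd
    simp only [Dr, Finset.mem_filter, Nat.mem_divisors] at hd
    exact fiber_lemma n 1 d hn (Or.inl rfl) hd.1.1 hd.2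
  have h3 : ∀ d ∈ Dr n 3, Phir (n / d) 3 =
      ∏ b ∈ ((Finset.range n).filter (fun b => b % 4 = 1)).filter
        (fun b => Nat.gcd b n = d),
        (X - C (Complex.exp (2 * Real.pi * Complex.I * b / n))) := by
    intro d hd
    simp only [Dr, Finset.mem_filter, Nat.mem_divisors] at hd
    exact fiber_lemma n 3 d hn (Or.inr rfl) hd.1.1 hd.2
  rw [Finset.prod_congr rfl h1, Finset.prod_congr rfl h3]
  rw [← Finset.prod_union]
  · have hun : Dr n 1 ∪ Dr n 3 = n.divisors.filter (fun d => d % 4 = 1 ∨ d % 4 = 3) := by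
      unfold Dr
      rw [← Finset.filter_or]
    rw [hun]
    refine (Finset.prod_fiberwise_of_maps_to ?_ _).symm
    intro b hb
    simp only [Finset.mem_filter, Finset.mem_range, Nat.mem_divisors] at hb ⊢
    obtain ⟨hblt, hb4⟩ := hb
    refine ⟨⟨Nat.gcd_dvd_right b n, hn.ne'⟩, ?_⟩
    have hodd : Nat.gcd b n % 2 = 1 := by
      by_contra h
      have h2 : 2 ∣ Nat.gcd b n := by omega
      have : 2 ∣ b := h2.trans (Nat.gcd_dvd_left b n)
      omega
    omega
  · rw [Finset.disjoint_left]
    intro d hd1 hd3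
    simp only [Dr, Finset.mem_filter] at hd1 hd3
    omega
end

section
/- Let n ≡ 0 (mod 4). Then x^{n/4} + i = ∏_{d ∈ D_n^1} Φ_{n/d}^3(x) · ∏_{d ∈ D_n^3} Φ_{n/d}^1(x). -/
open Finset Polynomial

noncomputable def fr (n a : ℕ) : ℂ := Complex.exp (2 * Real.pi * Complex.I * a / n)

lemma fr_mul {n d : ℕ} (b : ℕ) (hd : d ∣ n) (hd0 : 0 < d) (hn : 0 < n) :
    Complex.exp (2 * Real.pi * Complex.I * b / ((n / d : ℕ) : ℂ)) = fr n (d * b) := by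
  have h : (n / d : ℕ) * d = n := Nat.div_mul_cancel hd
  have hnd0 : ((n / d : ℕ) : ℂ) ≠ 0 := by
    have : 0 < n / d := Nat.div_pos (Nat.le_of_dvd hn hd) hd0
    exact_mod_cast this.ne'
  have hd0' : (d : ℂ) ≠ 0 := by exact_mod_cast hd0.ne'
  unfold fr
  congr 1
  have hn' : ((n : ℂ)) = ((n / d : ℕ) : ℂ) * d := by exact_mod_cast h.symm
  rw [hn']
  push_cast
  field_simp

lemma exp_three_halves : Complex.exp ((3 / 2 : ℂ) * Real.pi * Complex.I) = -Complex.I := by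
  have h : (3 / 2 : ℂ) * Real.pi * Complex.I
      = Real.pi * Complex.I + (Real.pi / 2 : ℂ) * Complex.I := by ring
  rw [h, Complex.exp_add, Complex.exp_pi_mul_I, Complex.exp_mul_I,
    Complex.cos_pi_div_two, Complex.sin_pi_div_two]
  ring

/-- Lemma A: factorization of `X^k + i`. -/
lemma lemA (n k : ℕ) (hk0 : 0 < k) (hnk : n = 4 * k) :
    (X : Polynomial ℂ) ^ k + C Complex.I =
      ∏ a ∈ (Finset.range n).filter (fun a => a % 4 = 3), (X - C (fr n a)) := by
  have hn0 : (0:ℕ) < n := by omega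
  have hnC : ((n : ℂ)) ≠ 0 := by exact_mod_cast hn0.ne'
  have hkC : ((k : ℂ)) ≠ 0 := by exact_mod_cast hk0.ne'
  have hζ := Complex.isPrimitiveRoot_exp k hk0.ne'
  have e : (fr n 3) ^ k = -Complex.I := by
    unfold fr
    rw [← Complex.exp_nat_mul]
    rw [← exp_three_halves]
    congr 1
    have hnk' : ((n : ℂ)) = 4 * k := by exact_mod_cast hnk
    rw [hnk']
    push_cast
    field_simp
    ring
  have := X_pow_sub_C_eq_prod hζ hk0 e
  have hL : (X : Polynomial ℂ) ^ k + C Complex.I = X ^ k - C (-Complex.I) := by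
    rw [map_neg, sub_neg_eq_add]
  rw [hL, this]
  have hterm : ∀ j, Complex.exp (2 * Real.pi * Complex.I / k) ^ j * fr n 3
      = fr n (4 * j + 3) := by
    intro j
    unfold fr
    rw [← Complex.exp_nat_mul, ← Complex.exp_add]
    congr 1
    have hnk' : ((n : ℂ)) = 4 * k := by exact_mod_cast hnk
    rw [hnk']
    push_cast
    field_simp
  calc ∏ j ∈ Finset.range k, (X - C (Complex.exp (2 * Real.pi * Complex.I / k) ^ j * fr n 3))
      = ∏ j ∈ Finset.range k, (X - C (fr n (4 * j + 3))) := by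
        exact Finset.prod_congr rfl fun j _ => by rw [hterm]
    _ = ∏ a ∈ (Finset.range n).filter (fun a => a % 4 = 3), (X - C (fr n a)) := by
        apply Finset.prod_nbij' (fun j => 4 * j + 3) (fun a => a / 4)
        · intro j hj
          simp only [Finset.mem_filter, Finset.mem_range] at *
          omega
        · intro a ha
          simp only [Finset.mem_filter, Finset.mem_range] at *
          omega
        · intro j hj; simp only [Finset.mem_range] at hj; omega
        · intro a ha
          simp only [Finset.mem_filter, Finset.mem_range] at ha
          omega
        · intro j hj; rfl

def Bset (n d : ℕ) : Finset ℕ := (Grone (n/d) (3*d%4)).image (fun b => d*b)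

lemma mem_Grone {m r a : ℕ} : a ∈ Grone m r ↔ a < m ∧ 1 ≤ a ∧ Nat.gcd a m = 1 ∧ a % 4 = r := by
  simp [Grone, Finset.mem_filter, Finset.mem_range, and_assoc]

lemma gcd_of_mem {n d b : ℕ} (hd : d ∣ n) (hb : Nat.gcd b (n / d) = 1) :
    Nat.gcd (d * b) n = d := by
  have h : n = d * (n / d) := (Nat.mul_div_cancel' hd).symm
  calc Nat.gcd (d*b) n = Nat.gcd (d*b) (d*(n/d)) := by rw [← h]
    _ = d * Nat.gcd b (n/d) := Nat.gcd_mul_left d b (n/d)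
    _ = d := by rw [hb, mul_one]

theorem stmt9 (n : ℕ) (hn : 0 < n) (h4 : n % 4 = 0) :
    (X : Polynomial ℂ) ^ (n / 4) + C Complex.I =
      (∏ d ∈ Dr n 1, Phir (n / d) 3) * (∏ d ∈ Dr n 3, Phir (n / d) 1) := by
  have hk0 : 0 < n / 4 := by omega
  rw [lemA n (n/4) hk0 (by omega)]
  have hPhi : ∀ d ∈ n.divisors, Phir (n/d) (3*d%4) = ∏ a ∈ Bset n d, (X - C (fr n a)) := by
    intro d hd
    have hdvd : d ∣ n := Nat.dvd_of_mem_divisors hd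
    have hd0 : 0 < d := Nat.pos_of_mem_divisors hd
    unfold Bset
    rw [Finset.prod_image (fun x _ y _ h => Nat.eq_of_mul_eq_mul_left hd0 h)]
    unfold Phir
    exact Finset.prod_congr rfl fun b _ => by rw [fr_mul b hdvd hd0 hn]
  have hD1 : ∀ d ∈ Dr n 1, Phir (n/d) 3 = ∏ a ∈ Bset n d, (X - C (fr n a)) := by
    intro d hd
    simp only [Dr, Finset.mem_filter] at hd
    have := hPhi d hd.1
    rwa [show 3*d%4 = 3 by omega] at this
  have hD3 : ∀ d ∈ Dr n 3, Phir (n/d) 1 = ∏ a ∈ Bset n d, (X - C (fr n a)) := by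
    intro d hd
    simp only [Dr, Finset.mem_filter] at hd
    have := hPhi d hd.1
    rwa [show 3*d%4 = 1 by omega] at this
  have hdisj : Disjoint (Dr n 1) (Dr n 3) := by
    simp only [Finset.disjoint_left, Dr, Finset.mem_filter]
    rintro a ⟨_, h1⟩ ⟨_, h3⟩
    omega
  have hunion : Dr n 1 ∪ Dr n 3 = n.divisors.filter (fun d => d % 2 = 1) := by
    ext d
    simp only [Finset.mem_union, Dr, Finset.mem_filter]
    constructor
    · rintro (⟨h,h1⟩|⟨h,h3⟩) <;> exact ⟨h, by omega⟩
    · rintro ⟨h, hodd⟩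
      have : d % 4 = 1 ∨ d % 4 = 3 := by omega
      rcases this with h1|h3
      exacts [Or.inl ⟨h,h1⟩, Or.inr ⟨h,h3⟩]
  have hgcd : ∀ d ∈ n.divisors, ∀ a ∈ Bset n d, Nat.gcd a n = d := by
    intro d hd a ha
    simp only [Bset, Finset.mem_image] at ha
    obtain ⟨b, hb, rfl⟩ := ha
    rw [mem_Grone] at hb
    exact gcd_of_mem (Nat.dvd_of_mem_divisors hd) hb.2.2.1
  have hpair : (↑(n.divisors.filter (fun d => d % 2 = 1)) : Set ℕ).PairwiseDisjoint (Bset n) := by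
    intro d1 h1 d2 h2 hne
    simp only [Finset.coe_filter, Set.mem_setOf_eq] at h1 h2
    simp only [Function.onFun, Finset.disjoint_left]
    intro a ha1 ha2
    exact hne ((hgcd d1 h1.1 a ha1).symm.trans (hgcd d2 h2.1 a ha2))
  have hbU : (n.divisors.filter (fun d => d % 2 = 1)).biUnion (Bset n)
      = (Finset.range n).filter (fun a => a % 4 = 3) := by
    ext a
    simp only [Finset.mem_biUnion, Finset.mem_filter, Finset.mem_range, Nat.mem_divisors,
      Bset, Finset.mem_image, mem_Grone]
    constructor
    · rintro ⟨d, ⟨⟨hdvd, _⟩, hodd⟩, b, ⟨hblt, hb1, hbg, hbm⟩, rfl⟩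
      have hd0 : 0 < d := Nat.pos_of_dvd_of_pos hdvd hn
      constructor
      · calc d*b < d*(n/d) := mul_lt_mul_of_pos_left hblt hd0
          _ = n := Nat.mul_div_cancel' hdvd
      · have h4d : d % 4 = 1 ∨ d % 4 = 3 := by omega
        have hmm := Nat.mul_mod d b 4
        rcases h4d with h|h <;> rw [h] at hmm <;> omega
    · rintro ⟨hlt, hm4⟩
      have ha0 : 0 < a := by omega
      have hdpos : 0 < Nat.gcd a n := Nat.gcd_pos_of_pos_right a hn
      have hdodd : Nat.gcd a n % 2 = 1 := by
        obtain ⟨c, hc⟩ := Nat.gcd_dvd_left a n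
        have h2 := Nat.mul_mod (Nat.gcd a n) c 2
        rw [← hc] at h2
        have hcase : Nat.gcd a n % 2 = 0 ∨ Nat.gcd a n % 2 = 1 := by omega
        rcases hcase with h|h
        · rw [h] at h2; omega
        · exact h
      refine ⟨Nat.gcd a n, ⟨⟨Nat.gcd_dvd_right a n, hn.ne'⟩, hdodd⟩,
        a / Nat.gcd a n, ⟨?_, ?_, ?_, ?_⟩, ?_⟩
      · exact Nat.div_lt_div_of_lt_of_dvd (Nat.gcd_dvd_right a n) hlt
      · exact Nat.div_pos (Nat.le_of_dvd ha0 (Nat.gcd_dvd_left a n)) hdpos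
      · exact Nat.coprime_div_gcd_div_gcd hdpos
      · have hc : Nat.gcd a n * (a / Nat.gcd a n) = a := Nat.mul_div_cancel' (Nat.gcd_dvd_left a n)
        have hmm := Nat.mul_mod (Nat.gcd a n) (a / Nat.gcd a n) 4
        rw [hc] at hmm
        have h4d : Nat.gcd a n % 4 = 1 ∨ Nat.gcd a n % 4 = 3 := by omega
        rcases h4d with h|h <;> rw [h] at hmm <;> omega
      · exact Nat.mul_div_cancel' (Nat.gcd_dvd_left a n)
  calc ∏ a ∈ (Finset.range n).filter (fun a => a % 4 = 3), (X - C (fr n a))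
      = ∏ a ∈ (n.divisors.filter (fun d => d % 2 = 1)).biUnion (Bset n), (X - C (fr n a)) := by
        rw [hbU]
    _ = ∏ d ∈ n.divisors.filter (fun d => d % 2 = 1), ∏ a ∈ Bset n d, (X - C (fr n a)) :=
        Finset.prod_biUnion hpair
    _ = ∏ d ∈ Dr n 1 ∪ Dr n 3, ∏ a ∈ Bset n d, (X - C (fr n a)) := by rw [hunion]
    _ = (∏ d ∈ Dr n 1, ∏ a ∈ Bset n d, (X - C (fr n a))) *
        ∏ d ∈ Dr n 3, ∏ a ∈ Bset n d, (X - C (fr n a)) := Finset.prod_union hdisj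
    _ = (∏ d ∈ Dr n 1, Phir (n / d) 3) * (∏ d ∈ Dr n 3, Phir (n / d) 1) := by
        rw [← Finset.prod_congr rfl hD1, ← Finset.prod_congr rfl hD3]
end
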